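/- Let n be a positive integer, μ ∈ ℂ^n a generic vector, γ ∈ ℤ^n \ {0}, d_γ ∈ 𝔥 \ {0}, k ∈ ℤ and 1 ≤ i ≤ n. If the Lie bracket [t^γ d_γ, t_i^k d_μ] = 0 in the Witt algebra W_n, then γ = k·ε_i and d_γ = c·d_μ for some c ∈ ℂ^*; that is, t^γ d_γ = c·t_i^k d_μ. -/

import Mathlib

open scoped BigOperators

noncomputable section

/-- The Laurent polynomial algebra `ℂ[t₁^{±1},…,tₙ^{±1}]`, realized as the group
algebra of `ℤⁿ` over `ℂ`. -/
abbrev LaurentAlg (n : ℕ) : Type := AddMonoidAlgebra ℂ (Fin n → ℤ)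

/-- The Witt algebra `Wₙ = Der(ℂ[t₁^{±1},…,tₙ^{±1}])`. -/
abbrev WittAlg (n : ℕ) : Type := Derivation ℂ (LaurentAlg n) (LaurentAlg n)

/-- Pairing `(μ, β) ↦ ∑ μᵢ βᵢ`. -/
def dotp {n : ℕ} (μ : Fin n → ℂ) (β : Fin n → ℤ) : ℂ := ∑ i, μ i * (β i : ℂ)

lemma dotp_add {n : ℕ} (μ : Fin n → ℂ) (β γ : Fin n → ℤ) :
    dotp μ (β + γ) = dotp μ β + dotp μ γ := by
  simp [dotp, mul_add, Finset.sum_add_distrib]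

lemma dotp_zero {n : ℕ} (μ : Fin n → ℂ) : dotp μ 0 = 0 := by simp [dotp]

/-- A vector `μ ∈ ℂⁿ` is generic if `μ·α ≠ 0` for all nonzero `α ∈ ℤⁿ`. -/
def IsGeneric {n : ℕ} (μ : Fin n → ℂ) : Prop :=
  ∀ α : Fin n → ℤ, α ≠ 0 → dotp μ α ≠ 0

/-- Underlying linear map of `t^α d_μ`. -/
def wdAux {n : ℕ} (μ : Fin n → ℂ) (α : Fin n → ℤ) : LaurentAlg n →ₗ[ℂ] LaurentAlg n :=
  (Finsupp.lsum ℂ fun β => dotp μ β • AddMonoidAlgebra.lsingle (α + β)) ∘ₗ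
    (AddMonoidAlgebra.coeffLinearEquiv ℂ).toLinearMap

lemma wdAux_single {n : ℕ} (μ : Fin n → ℂ) (α β : Fin n → ℤ) (c : ℂ) :
    wdAux μ α (AddMonoidAlgebra.single β c) = dotp μ β • AddMonoidAlgebra.single (α + β) c := by
  classical
  simp [wdAux, AddMonoidAlgebra.coeffLinearEquiv, AddMonoidAlgebra.lsingle]

/-- The derivation `t^α d_μ` of the Laurent polynomial algebra, sending
`t^β ↦ (μ·β) t^{α+β}`.  In particular `wd μ 0 = d_μ` and
`wd (Pi.single i 1) α = t^α dᵢ`. -/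
def wd {n : ℕ} (μ : Fin n → ℂ) (α : Fin n → ℤ) : WittAlg n where
  toLinearMap := wdAux μ α
  map_one_eq_zero' := by
    rw [show (1 : LaurentAlg n) = AddMonoidAlgebra.single 0 1 from rfl, wdAux_single, dotp_zero,
      zero_smul]
  leibniz' := by
    intro a b
    show wdAux μ α (a * b) = a • wdAux μ α b + b • wdAux μ α a
    induction a using AddMonoidAlgebra.induction_linear with
    | zero => simp
    | add f g hf hg =>
        rw [add_mul, map_add, hf, hg, map_add]
        simp only [smul_eq_mul, add_mul, mul_add]
        ring
    | single β c =>
      induction b using AddMonoidAlgebra.induction_linear with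
      | zero => simp
      | add f g hf hg =>
          rw [mul_add, map_add, hf, hg, map_add]
          simp only [smul_eq_mul, add_mul, mul_add]
          ring
      | single γ d =>
          show wdAux μ α (AddMonoidAlgebra.single β c * AddMonoidAlgebra.single γ d) =
            AddMonoidAlgebra.single β c • wdAux μ α (AddMonoidAlgebra.single γ d)
            + AddMonoidAlgebra.single γ d • wdAux μ α (AddMonoidAlgebra.single β c)
          rw [AddMonoidAlgebra.single_mul_single, wdAux_single, wdAux_single, wdAux_single,
            smul_eq_mul, smul_eq_mul, mul_smul_comm, mul_smul_comm,
            AddMonoidAlgebra.single_mul_single, AddMonoidAlgebra.single_mul_single,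
            dotp_add, add_smul]
          rw [show β + (α + γ) = α + (β + γ) by abel, show γ + (α + β) = α + (β + γ) by abel,
            mul_comm d c, add_comm]

/-- A linear map `Δ` on a Lie algebra `L` is a local derivation if for each `x`
there is a Lie algebra derivation `Dₓ` with `Δ x = Dₓ x`. -/
def IsLocalDerivation {L : Type*} [LieRing L] [LieAlgebra ℂ L] (Δ : L →ₗ[ℂ] L) : Prop :=
  ∀ x : L, ∃ D : LieDerivation ℂ L L, Δ x = D x

end

/-! The bracket of `t^γ d_c` and `t^α d_μ` is `t^{γ+α} d_v` with `v = (c,α) μ − (μ,γ) c`, and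
`t^δ d_v = 0` only for `v = 0`. So the bracket vanishes iff `(c,α) μ = (μ,γ) c`. Genericity gives
`(μ,γ) ≠ 0`, hence `c` is a multiple of `μ`, nonzero because `c` is. Pairing the relation with
`α` yields `(μ,α) = (μ,γ)`, and genericity once more gives `γ = α`. -/

lemma dotp_smul_left {n : ℕ} (a : ℂ) (μ : Fin n → ℂ) (β : Fin n → ℤ) :
    dotp (a • μ) β = a * dotp μ β := by
  simp [dotp, Finset.mul_sum, mul_assoc]

lemma dotp_sub_left {n : ℕ} (μ ν : Fin n → ℂ) (β : Fin n → ℤ) :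
    dotp (μ - ν) β = dotp μ β - dotp ν β := by
  simp [dotp, sub_mul, Finset.sum_sub_distrib]

lemma dotp_sub {n : ℕ} (μ : Fin n → ℂ) (β γ : Fin n → ℤ) :
    dotp μ (β - γ) = dotp μ β - dotp μ γ := by
  simp [dotp, mul_sub, Finset.sum_sub_distrib]

lemma dotp_single_one {n : ℕ} (μ : Fin n → ℂ) (j : Fin n) :
    dotp μ (Pi.single j 1) = μ j := by
  simp [dotp, Pi.single_apply]

lemma IsGeneric.eq_of_dotp_eq {n : ℕ} {μ : Fin n → ℂ} (hμ : IsGeneric μ) {α β : Fin n → ℤ}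
    (h : dotp μ α = dotp μ β) : α = β := by
  by_contra hne
  exact hμ (α - β) (sub_ne_zero.mpr hne) (by rw [dotp_sub, h, sub_self])

lemma WittAlg.ext_single {n : ℕ} {D₁ D₂ : WittAlg n}
    (h : ∀ β, D₁ (AddMonoidAlgebra.single β 1) = D₂ (AddMonoidAlgebra.single β 1)) :
    D₁ = D₂ := by
  refine Derivation.ext fun x => ?_
  induction x using AddMonoidAlgebra.induction_linear with
  | zero => simp
  | add f g hf hg => rw [map_add, map_add, hf, hg]
  | single β a =>
      rw [← mul_one a, ← AddMonoidAlgebra.smul_single', Derivation.map_smul,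
        Derivation.map_smul, h]

lemma wd_single {n : ℕ} (μ : Fin n → ℂ) (α β : Fin n → ℤ) (a : ℂ) :
    wd μ α (AddMonoidAlgebra.single β a) = dotp μ β • AddMonoidAlgebra.single (α + β) a :=
  wdAux_single μ α β a

lemma wd_smul {n : ℕ} (a : ℂ) (μ : Fin n → ℂ) (α : Fin n → ℤ) :
    wd (a • μ) α = a • wd μ α :=
  WittAlg.ext_single fun β => by
    rw [Derivation.smul_apply, wd_single, wd_single, dotp_smul_left, smul_smul]

lemma wd_zero_left {n : ℕ} (α : Fin n → ℤ) : wd (0 : Fin n → ℂ) α = 0 := by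
  simpa using wd_smul 0 0 α

lemma wd_eq_zero_iff {n : ℕ} {μ : Fin n → ℂ} {α : Fin n → ℤ} : wd μ α = 0 ↔ μ = 0 := by
  refine ⟨fun h => funext fun j => ?_, fun h => h ▸ wd_zero_left α⟩
  have hj := congrArg (· (AddMonoidAlgebra.single (Pi.single j 1) 1)) h
  simpa [wd_single, dotp_single_one] using hj

lemma lie_wd {n : ℕ} (a b : Fin n → ℂ) (α β : Fin n → ℤ) :
    ⁅wd a α, wd b β⁆ = wd (dotp a β • b - dotp b α • a) (α + β) :=
  WittAlg.ext_single fun δ => by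
    rw [Derivation.commutator_apply, wd_single, Derivation.map_smul, wd_single, wd_single,
      Derivation.map_smul, wd_single, wd_single, smul_smul, smul_smul,
      show β + (α + δ) = α + β + δ by abel, ← add_assoc, ← sub_smul,
      dotp_sub_left, dotp_smul_left, dotp_smul_left, dotp_add, dotp_add]
    congr 1
    ring

lemma lie_wd_eq_zero_iff {n : ℕ} {a b : Fin n → ℂ} {α β : Fin n → ℤ} :
    ⁅wd a α, wd b β⁆ = 0 ↔ dotp a β • b = dotp b α • a := by
  rw [lie_wd, wd_eq_zero_iff, sub_eq_zero]

theorem bracket_vanishing_forces_proportionality_general (n : ℕ)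
    (μ : Fin n → ℂ) (hμ : IsGeneric μ)
    (γ : Fin n → ℤ) (hγ : γ ≠ 0) (c : Fin n → ℂ) (hc : wd c 0 ≠ 0)
    (k : ℤ) (i : Fin n)
    (hbr : ⁅wd c γ, wd μ (Pi.single i k)⁆ = 0) :
    γ = Pi.single i k ∧ ∃ c' : ℂ, c' ≠ 0 ∧ wd c γ = c' • wd μ (Pi.single i k) := by
  set α : Fin n → ℤ := Pi.single i k
  set P := dotp c α
  set Q := dotp μ γ
  have hrel : P • μ = Q • c := lie_wd_eq_zero_iff.mp hbr
  have hc0 : c ≠ 0 := fun h => hc (wd_eq_zero_iff.mpr h)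
  have hQ : Q ≠ 0 := hμ γ hγ
  have hP : P ≠ 0 := by
    rintro hP
    rw [hP, zero_smul, eq_comm, smul_eq_zero] at hrel
    exact hrel.elim hQ hc0
  have hγα : γ = α := by
    have h : P * dotp μ α = Q * P := by
      simpa only [dotp_smul_left] using congrArg (dotp · α) hrel
    exact hμ.eq_of_dotp_eq (mul_left_cancel₀ hP (by rw [h, mul_comm]))
  have hcμ : c = (P / Q) • μ := by
    rw [div_eq_inv_mul, mul_smul, hrel, inv_smul_smul₀ hQ]
  exact ⟨hγα, P / Q, div_ne_zero hP hQ, by rw [hγα, hcμ, wd_smul]⟩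

/-- Let `μ` be generic, `γ ∈ ℤⁿ \ {0}`, `d_γ ∈ 𝔥 \ {0}` (encoded by a
coefficient vector `c` with `wd c 0 ≠ 0`), `k ∈ ℤ` and `i`. If `[t^γ d_γ, tᵢ^k d_μ] = 0`
in `Wₙ`, then `γ = k·εᵢ` and `t^γ d_γ = c'·tᵢ^k d_μ` for some nonzero scalar `c'`. -/
theorem bracket_vanishing_forces_proportionality (n : ℕ) (hn : 0 < n)
    (μ : Fin n → ℂ) (hμ : IsGeneric μ)
    (γ : Fin n → ℤ) (hγ : γ ≠ 0) (c : Fin n → ℂ) (hc : wd c 0 ≠ 0)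
    (k : ℤ) (i : Fin n)
    (hbr : ⁅wd c γ, wd μ (Pi.single i k)⁆ = 0) :
    γ = Pi.single i k ∧ ∃ c' : ℂ, c' ≠ 0 ∧ wd c γ = c' • wd μ (Pi.single i k) :=
  bracket_vanishing_forces_proportionality_general n μ hμ γ hγ c hc k i hbr
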